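/- Let I be a support-2 monomial ideal in K[x1,...,x5] whose underlying graph is the 5-cycle C_5, and suppose at least two minimal generators of I are supported on the edge {x1, x2}. Then the monomial x1^{ν_{1,2}} x2^{ν_{2,1}} x4^{ν_{4,3}} lies in I^{(1)} but not in I; in particular I has an embedded associated prime. -/

import Mathlib

set_option synthInstance.maxHeartbeats 1000000
set_option maxHeartbeats 1000000

open MvPolynomial

section Defs

variable {K : Type*} [Field K] {σ : Type*}

/-- `I` is a monomial ideal. -/
def IsMonomialIdeal (I : Ideal (MvPolynomial σ K)) : Prop :=
  ∃ A : Set (σ →₀ ℕ), I = Ideal.span ((fun a => (monomial a (1 : K) : MvPolynomial σ K)) '' A)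

/-- Exponent vectors of the minimal monomial generators of `I`. -/
def minGens (I : Ideal (MvPolynomial σ K)) : Set (σ →₀ ℕ) :=
  {a | (monomial a (1 : K) : MvPolynomial σ K) ∈ I ∧
    ∀ b : σ →₀ ℕ, (monomial b (1 : K) : MvPolynomial σ K) ∈ I → b ≤ a → b = a}

/-- A support-2 monomial ideal: every minimal monomial generator is supported
on exactly two variables. -/
def IsSupportTwo (I : Ideal (MvPolynomial σ K)) : Prop :=
  ∀ a ∈ minGens I, a.support.card = 2

variable [DecidableEq σ]

/-- Minimal monomial generators of `I` supported on `{i, j}`. -/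
def supportedOn (I : Ideal (MvPolynomial σ K)) (i j : σ) : Set (σ →₀ ℕ) :=
  {a | a ∈ minGens I ∧ a.support = {i, j}}

/-- `ν_{i,j}`: the minimum exponent of `x_i` among the minimal generators of `I`
supported on `{i, j}`. -/
noncomputable def nuExp (I : Ideal (MvPolynomial σ K)) (i j : σ) : ℕ :=
  sInf ((fun a => a i) '' supportedOn I i j)

/-- `μ_{i,j}`: the maximum exponent of `x_i` among the minimal generators of `I`
supported on `{i, j}`. -/
noncomputable def muExp (I : Ideal (MvPolynomial σ K)) (i j : σ) : ℕ :=
  sSup ((fun a => a i) '' supportedOn I i j)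

/-- The underlying simple graph `G(I)` of a support-2 monomial ideal. -/
def underGraph (I : Ideal (MvPolynomial σ K)) : SimpleGraph σ where
  Adj i j := i ≠ j ∧ (supportedOn I i j).Nonempty
  symm := ⟨by
    rintro i j ⟨hij, a, hmin, hs⟩
    exact ⟨hij.symm, a, hmin, by rw [hs, Finset.pair_comm]⟩⟩
  loopless := ⟨fun i h => h.1 rfl⟩

end Defs

section Symbolic

variable {R : Type*} [CommRing R]

/-- The component of `I` at a prime `P`, namely `I S_P ∩ S`. -/
noncomputable def localizedComponent (I P : Ideal R) (hP : P.IsPrime) : Ideal R :=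
  letI := hP
  (I.map (algebraMap R (Localization.AtPrime P))).comap
    (algebraMap R (Localization.AtPrime P))

/-- The `s`-th symbolic power `I^{(s)} = ⋂_{P ∈ MinAss(I)} (I^s S_P ∩ S)`. -/
noncomputable def symbolicPower (I : Ideal R) (s : ℕ) : Ideal R :=
  ⨅ P : I.minimalPrimes, localizedComponent (I ^ s) P.1 P.2.1.1

/-- A Simis ideal: `I^{(s)} = I^s` for all `s ≥ 1`. -/
def IsSimis (I : Ideal R) : Prop := ∀ s : ℕ, 1 ≤ s → symbolicPower I s = I ^ s

/-- `I` has no embedded associated primes. -/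
def NoEmbeddedPrimes (I : Ideal R) : Prop :=
  ∀ P ∈ associatedPrimes R (R ⧸ I), P ∈ I.minimalPrimes

end Symbolic

section Decomp

variable {K : Type*} [Field K] {σ : Type*}

/-- An irreducible monomial ideal: generated by pure powers of variables. -/
def IsIrredMonomialIdeal (Q : Ideal (MvPolynomial σ K)) : Prop :=
  ∃ (t : Finset σ) (e : σ → ℕ), (∀ i ∈ t, 1 ≤ e i) ∧
    Q = Ideal.span ((fun i => (X i : MvPolynomial σ K) ^ e i) '' t)

/-- `I` has a minimal (irredundant, distinct radicals) irreducible decomposition. -/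
def HasMinimalIrredDecomp (I : Ideal (MvPolynomial σ K)) : Prop :=
  ∃ (r : ℕ) (Q : Fin r → Ideal (MvPolynomial σ K)),
    (∀ k, IsIrredMonomialIdeal (Q k)) ∧ I = ⨅ k, Q k ∧
    (∀ k, (⨅ l ∈ ({k}ᶜ : Set (Fin r)), Q l) ≠ I) ∧
    (∀ k l, k ≠ l → (Q k).radical ≠ (Q l).radical)

/-- The ideal obtained from `J` by the standard linear weighting `x_i ↦ x_i^{d_i}`. -/
noncomputable def weightedIdeal (d : σ → ℕ) (J : Ideal (MvPolynomial σ K)) : Ideal (MvPolynomial σ K) :=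
  Ideal.span {m | ∃ a ∈ minGens J, ∃ b : σ →₀ ℕ,
    (∀ i, b i = d i * a i) ∧ m = (monomial b (1 : K) : MvPolynomial σ K)}

/-- `I` has a standard linear weighting: there are `d_i ≥ 1` such that every
minimal generator supported on `{i,j}` is `x_i^{d_i} x_j^{d_j}`. -/
def HasStdWeighting (I : Ideal (MvPolynomial σ K)) : Prop :=
  ∃ d : σ → ℕ, (∀ i, 1 ≤ d i) ∧ ∀ a ∈ minGens I, ∀ i ∈ a.support, a i = d i

variable (K) in
/-- The edge ideal of a simple graph. -/
noncomputable def edgeIdeal (G : SimpleGraph σ) : Ideal (MvPolynomial σ K) :=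
  Ideal.span {m | ∃ i j, G.Adj i j ∧ m = (X i * X j : MvPolynomial σ K)}

end Decomp

section Graph

variable {σ : Type*}

/-- A vertex cover of a simple graph. -/
def IsVertexCover (G : SimpleGraph σ) (C : Set σ) : Prop :=
  ∀ ⦃i j⦄, G.Adj i j → i ∈ C ∨ j ∈ C

/-- A minimal vertex cover of a simple graph. -/
def IsMinimalVertexCover (G : SimpleGraph σ) (C : Set σ) : Prop :=
  IsVertexCover G C ∧ ∀ D ⊆ C, IsVertexCover G D → D = C

end Graph

section CM

variable {K : Type*} [Field K] {σ : Type*}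

/-- The depth of `S/I` with respect to the irrelevant maximal ideal
`⟨x_1, …, x_n⟩`: the supremum of lengths of regular sequences on `S/I`
consisting of elements of that ideal. -/
noncomputable def quotDepth (I : Ideal (MvPolynomial σ K)) : ℕ∞ :=
  sSup {n : ℕ∞ | ∃ rs : List (MvPolynomial σ K), (rs.length : ℕ∞) = n ∧
    (∀ r ∈ rs, r ∈ Ideal.span (Set.range (X : σ → MvPolynomial σ K))) ∧
    RingTheory.Sequence.IsRegular (MvPolynomial σ K ⧸ I)
      (rs.map (Ideal.Quotient.mk I))}

/-- `S/I` is Cohen–Macaulay: depth equals Krull dimension. -/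
def IsCohenMacaulayQuot (I : Ideal (MvPolynomial σ K)) : Prop :=
  (quotDepth I : WithBot ℕ∞) = ringKrullDim (MvPolynomial σ K ⧸ I)

/-- The height of a prime ideal, as the Krull dimension of the localization. -/
noncomputable def primeHeight' {R : Type*} [CommRing R] (P : Ideal R) (hP : P.IsPrime) :
    WithBot ℕ∞ :=
  letI := hP
  ringKrullDim (Localization.AtPrime P)

/-- `I` is unmixed: all associated primes of `S/I` have the same height. -/
def IsUnmixed {R : Type*} [CommRing R] (I : Ideal R) : Prop :=
  ∀ P, ∀ hP : P ∈ associatedPrimes R (R ⧸ I), ∀ Q, ∀ hQ : Q ∈ associatedPrimes R (R ⧸ I),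
    primeHeight' P hP.1 = primeHeight' Q hQ.1

end CM

/-!
Variables are indexed by `Fin 5`, so `x₀` is the paper's `x₁`; let `m = x₀^{ν₀₁} x₁^{ν₁₀} x₃^{ν₃₂}`.

A minimal prime `P` of `I` is generated by the variables of a minimal vertex cover of the
pentagon. If `x₀ ∉ P`, a generator on the edge `{0, 1}` attaining `ν₁₀` divides `x₀^e m` for a
suitable `e`; similarly if `x₁ ∉ P` or `x₂ ∉ P` (using the edge `{3, 2}`). And `P` cannot contain
`x₀, x₁, x₂` at once, since `x₁` could then be dropped from the cover. Hence `m ∈ I^{(1)}`.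

A minimal generator dividing `m` lives on the only edge `{0, 1}` inside `supp m = {0, 1, 3}` and
has exponents at most `ν₀₁, ν₁₀`, so it divides every other generator on that edge; with two of
them this contradicts minimality, so `m ∉ I`. Finally, an associated prime containing `I : m` is
embedded, because every minimal prime misses an element of `I : m`.
-/

open MvPolynomial

section Monomial

variable {R σ : Type*} [CommSemiring R] [Nontrivial R] {I : Ideal (MvPolynomial σ R)}

theorem monomial_one_mem_of_le {g c : σ →₀ ℕ} (hle : g ≤ c) (hg : monomial g (1 : R) ∈ I) :
    monomial c (1 : R) ∈ I :=
  I.mem_of_dvd (monomial_one_dvd_monomial_one.mpr hle) hg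

theorem X_pow_mul_monomial_one_mem [DecidableEq σ] {g c : σ →₀ ℕ} {i j : σ}
    (hg : monomial g (1 : R) ∈ I) (hsupp : g.support = {i, j}) (hj : g j ≤ c j) :
    X i ^ g i * monomial c (1 : R) ∈ I := by
  rw [X_pow_eq_monomial, monomial_mul, one_mul]
  refine monomial_one_mem_of_le ((Finsupp.le_iff _ _).mpr ?_) hg
  rw [hsupp]
  rintro k hk
  rcases Finset.mem_insert.mp hk with rfl | hk
  · simp
  · rw [Finset.mem_singleton.mp hk]
    by_cases hij : i = j
    · simp [hij]
    · simpa [Finsupp.single_apply, hij] using hj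

end Monomial

section SpanX

variable {R σ : Type*} [CommRing R]

open Classical in
theorem isPrime_span_X_image [IsDomain R] (s : Set σ) :
    (Ideal.span (X '' s : Set (MvPolynomial σ R))).IsPrime := by
  set J := Ideal.span (X '' s : Set (MvPolynomial σ R))
  let kill : MvPolynomial σ R →ₐ[R] MvPolynomial σ R := aeval fun i => if i ∈ s then 0 else X i
  have hkill : (Ideal.Quotient.mkₐ R J).comp kill = Ideal.Quotient.mkₐ R J := by
    refine algHom_ext fun i => ?_
    by_cases hi : i ∈ s
    · have hXi : (X i : MvPolynomial σ R) ∈ J := Ideal.subset_span ⟨i, hi, rfl⟩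
      simp [kill, hi, Ideal.Quotient.eq_zero_iff_mem.mpr hXi]
    · simp [kill, hi]
  suffices J = RingHom.ker kill from this ▸ RingHom.ker_isPrime _
  refine le_antisymm (Ideal.span_le.mpr ?_) fun p hp => ?_
  · rintro _ ⟨i, hi, rfl⟩
    simp [kill, hi]
  · rw [← Ideal.Quotient.eq_zero_iff_mem, ← Ideal.Quotient.mkₐ_eq_mk R, ← hkill]
    simp [RingHom.mem_ker.mp hp]

theorem X_notMem_span_X_image [Nontrivial R] {s : Set σ} {i : σ} (hi : i ∉ s) :
    (X i : MvPolynomial σ R) ∉ Ideal.span (X '' s) := by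
  intro h
  obtain ⟨j, hj, hji⟩ := mem_ideal_span_X_image.mp h (Finsupp.single i 1) (by simp [support_X])
  obtain rfl : j = i := by
    by_contra hne
    exact hji (Finsupp.single_eq_of_ne' (Ne.symm hne))
  exact hi hj

theorem Ideal.IsPrime.exists_X_mem_of_monomial_one_mem {P : Ideal (MvPolynomial σ R)}
    (hP : P.IsPrime) {d : σ →₀ ℕ} (hd : monomial d (1 : R) ∈ P) : ∃ k ∈ d.support, X k ∈ P := by
  rw [monomial_eq, map_one, one_mul, Finsupp.prod] at hd
  obtain ⟨k, hk, hkP⟩ := hP.prod_mem_iff.mp hd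
  exact ⟨k, hk, hP.mem_of_pow_mem _ hkP⟩

theorem eq_span_X_image_of_mem_minimalPrimes {I P : Ideal (MvPolynomial σ R)} [IsDomain R]
    (hP : P ∈ I.minimalPrimes) {s : Set σ} (hI : I ≤ Ideal.span (X '' s))
    (hs : ∀ i ∈ s, X i ∈ P) : P = Ideal.span (X '' s) := by
  have hle : Ideal.span (X '' s) ≤ P := by
    rw [Ideal.span_le]
    rintro _ ⟨i, hi, rfl⟩
    exact hs i hi
  exact le_antisymm (hP.2 ⟨isPrime_span_X_image s, hI⟩ hle) hle

end SpanX

section Generators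

variable {K σ : Type*} [Field K] {I : Ideal (MvPolynomial σ K)}

theorem exists_mem_minGens_le {c : σ →₀ ℕ} (hc : monomial c (1 : K) ∈ I) :
    ∃ g ∈ minGens I, g ≤ c := by
  obtain ⟨g, ⟨hgI, hgc⟩, hmin⟩ := wellFounded_lt.has_min
    {b | monomial b (1 : K) ∈ I ∧ b ≤ c} ⟨c, hc, le_rfl⟩
  refine ⟨g, ⟨hgI, fun b hbI hbg => ?_⟩, hgc⟩
  by_contra hne
  exact hmin b ⟨hbI, hbg.trans hgc⟩ (lt_of_le_of_ne hbg hne)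

theorem le_span_X_image_of_forall_minGens (hmon : IsMonomialIdeal I) {s : Set σ}
    (hs : ∀ g ∈ minGens I, ∃ k ∈ g.support, k ∈ s) : I ≤ Ideal.span (X '' s) := by
  obtain ⟨A, hA⟩ := hmon
  rw [hA, Ideal.span_le]
  rintro _ ⟨c, hc, rfl⟩
  have hcI : monomial c (1 : K) ∈ I := hA ▸ Ideal.subset_span ⟨c, hc, rfl⟩
  obtain ⟨g, hg, hgc⟩ := exists_mem_minGens_le hcI
  obtain ⟨k, hkg, hks⟩ := hs g hg
  have hXk : (X k : MvPolynomial σ K) ∈ Ideal.span (X '' s) := Ideal.subset_span ⟨k, hks, rfl⟩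
  refine monomial_one_mem_of_le ?_ hXk
  simpa [Nat.one_le_iff_ne_zero] using (Finsupp.mem_support_iff.mp (Finsupp.support_mono hgc hkg))

variable [DecidableEq σ]

theorem supportedOn_comm (I : Ideal (MvPolynomial σ K)) (i j : σ) :
    supportedOn I i j = supportedOn I j i := by
  ext g
  simp only [supportedOn, Finset.pair_comm]

theorem nuExp_le {i j : σ} {f : σ →₀ ℕ} (hf : f ∈ supportedOn I i j) : nuExp I i j ≤ f i :=
  Nat.sInf_le ⟨f, hf, rfl⟩

theorem exists_apply_eq_nuExp {i j : σ} (hne : (supportedOn I i j).Nonempty) :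
    ∃ g ∈ supportedOn I i j, g i = nuExp I i j := by
  obtain ⟨g, hg, hgi⟩ := Nat.sInf_mem (hne.image fun a => a i)
  exact ⟨g, hg, hgi⟩

/-- Otherwise `e` would divide the other generator on the edge. -/
theorem nuExp_lt_or_nuExp_lt {a b e : σ →₀ ℕ} {i j : σ} (ha : a ∈ supportedOn I i j)
    (hb : b ∈ supportedOn I i j) (hab : a ≠ b) (he : e ∈ supportedOn I i j) :
    nuExp I i j < e i ∨ nuExp I j i < e j := by
  obtain ⟨f, hf, hfe⟩ : ∃ f ∈ supportedOn I i j, f ≠ e := by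
    rcases eq_or_ne e a with rfl | hea
    · exact ⟨b, hb, hab.symm⟩
    · exact ⟨a, ha, hea.symm⟩
  by_contra! hnu
  have hle : e ≤ f := by
    refine (Finsupp.le_iff _ _).mpr ?_
    rw [he.2]
    intro k hk
    rcases Finset.mem_insert.mp hk with rfl | hk
    · exact hnu.1.trans (nuExp_le hf)
    · rw [Finset.mem_singleton.mp hk]
      exact hnu.2.trans (nuExp_le (supportedOn_comm I i j ▸ hf))
  exact hfe (hf.1.2 e he.1.1 hle).symm

theorem exists_notMem_mul_monomial_mem {P : Ideal (MvPolynomial σ K)} (hP : P.IsPrime)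
    {i j : σ} (hX : X i ∉ P) (hne : (supportedOn I j i).Nonempty) {c : σ →₀ ℕ}
    (hc : nuExp I j i ≤ c j) : ∃ u ∉ P, u * monomial c (1 : K) ∈ I := by
  obtain ⟨g, hg, hgj⟩ := exists_apply_eq_nuExp hne
  refine ⟨X i ^ g i, fun h => hX (hP.mem_of_pow_mem _ h), ?_⟩
  exact X_pow_mul_monomial_one_mem hg.1.1 (by rw [hg.2, Finset.pair_comm]) (hgj ▸ hc)

end Generators

section Localization

variable {R : Type*} [CommRing R]

theorem mem_localizedComponent_of_mul_mem {J P : Ideal R} (hP : P.IsPrime) {x u : R}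
    (hu : u ∉ P) (hux : u * x ∈ J) : x ∈ localizedComponent J P hP := by
  have := hP
  have hunit : IsUnit (algebraMap R (Localization.AtPrime P) u) :=
    IsLocalization.map_units _ (⟨u, hu⟩ : P.primeCompl)
  refine Ideal.mem_comap.mpr ((Ideal.unit_mul_mem_iff_mem _ hunit).mp ?_)
  rw [← map_mul]
  exact Ideal.mem_map_of_mem _ hux

theorem mem_symbolicPower_one_of_forall_minimalPrimes {I : Ideal R} {x : R}
    (h : ∀ P ∈ I.minimalPrimes, ∃ u ∉ P, u * x ∈ I) : x ∈ symbolicPower I 1 := by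
  refine (Submodule.mem_iInf _).mpr fun P => ?_
  obtain ⟨u, hu, hux⟩ := h P.1 P.2
  exact mem_localizedComponent_of_mul_mem _ hu (by rwa [pow_one])

theorem exists_mem_associatedPrimes_notMem_minimalPrimes [IsNoetherianRing R] {I : Ideal R}
    {x : R} (hx : x ∉ I) (h : ∀ P ∈ I.minimalPrimes, ∃ u ∉ P, u * x ∈ I) :
    ∃ P ∈ associatedPrimes R (R ⧸ I), P ∉ I.minimalPrimes := by
  obtain ⟨P, hP, hcolon⟩ := exists_le_isAssociatedPrime_of_isNoetherianRing R
    (Ideal.Quotient.mk I x) (by rwa [Ne, Ideal.Quotient.eq_zero_iff_mem])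
  refine ⟨P, hP, fun hmin => ?_⟩
  obtain ⟨u, hu, hux⟩ := h P hmin
  refine hu (hcolon ?_)
  rw [Submodule.mem_colon_singleton, Submodule.mem_bot, Algebra.smul_def,
    Ideal.Quotient.algebraMap_eq, ← map_mul, Ideal.Quotient.eq_zero_iff_mem]
  exact hux

end Localization

section Pentagon

variable {K : Type*} [Field K] {I : Ideal (MvPolynomial (Fin 5) K)}

theorem exists_mem_supportedOn_succ (h2 : IsSupportTwo I)
    (hcyc : ∀ i j : Fin 5, (underGraph I).Adj i j ↔ (i ≠ j ∧ (j = i + 1 ∨ i = j + 1)))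
    {g : Fin 5 →₀ ℕ} (hg : g ∈ minGens I) : ∃ i, g ∈ supportedOn I i (i + 1) := by
  obtain ⟨i, j, hij, hsupp⟩ := Finset.card_eq_two.mp (h2 g hg)
  rcases ((hcyc i j).mp ⟨hij, g, hg, hsupp⟩).2 with rfl | rfl
  · exact ⟨i, hg, hsupp⟩
  · exact ⟨j, hg, by rw [hsupp, Finset.pair_comm]⟩

theorem le_span_X_image_of_forall_mem_or_succ_mem (hmon : IsMonomialIdeal I)
    (h2 : IsSupportTwo I)
    (hcyc : ∀ i j : Fin 5, (underGraph I).Adj i j ↔ (i ≠ j ∧ (j = i + 1 ∨ i = j + 1)))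
    {s : Finset (Fin 5)} (hs : ∀ i, i ∈ s ∨ i + 1 ∈ s) : I ≤ Ideal.span (X '' ↑s) := by
  refine le_span_X_image_of_forall_minGens hmon fun g hg => ?_
  obtain ⟨i, -, hsupp⟩ := exists_mem_supportedOn_succ h2 hcyc hg
  rw [hsupp]
  rcases hs i with hi | hi
  · exact ⟨i, by simp, hi⟩
  · exact ⟨i + 1, by simp, hi⟩

noncomputable def nuWitness (I : Ideal (MvPolynomial (Fin 5) K)) : Fin 5 →₀ ℕ :=
  Finsupp.single 0 (nuExp I 0 1) + Finsupp.single 1 (nuExp I 1 0) +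
    Finsupp.single 3 (nuExp I 3 2)

theorem support_nuWitness_subset : (nuWitness I).support ⊆ {0, 1, 3} := by
  intro k hk
  contrapose! hk
  fin_cases k <;> simp_all [nuWitness]

theorem monomial_nuWitness_notMem (h2 : IsSupportTwo I)
    (hcyc : ∀ i j : Fin 5, (underGraph I).Adj i j ↔ (i ≠ j ∧ (j = i + 1 ∨ i = j + 1)))
    {a b : Fin 5 →₀ ℕ} (ha : a ∈ supportedOn I 0 1) (hb : b ∈ supportedOn I 0 1)
    (hab : a ≠ b) : monomial (nuWitness I) (1 : K) ∉ I := by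
  intro hmem
  obtain ⟨g, hg, hgw⟩ := exists_mem_minGens_le hmem
  obtain ⟨i, hgi⟩ := exists_mem_supportedOn_succ h2 hcyc hg
  have hsupp : ({i, i + 1} : Finset (Fin 5)) ⊆ {0, 1, 3} :=
    hgi.2 ▸ (Finsupp.support_mono hgw).trans support_nuWitness_subset
  have hedge : ∀ i : Fin 5, ({i, i + 1} : Finset (Fin 5)) ⊆ {0, 1, 3} → i = 0 := by decide
  obtain rfl := hedge i hsupp
  have h0 : g 0 ≤ nuExp I 0 1 := by simpa [nuWitness] using hgw 0
  have h1 : g 1 ≤ nuExp I 1 0 := by simpa [nuWitness] using hgw 1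
  rcases nuExp_lt_or_nuExp_lt ha hb hab hgi with h | h <;> omega

theorem exists_notMem_mul_monomial_nuWitness_mem (hmon : IsMonomialIdeal I)
    (h2 : IsSupportTwo I)
    (hcyc : ∀ i j : Fin 5, (underGraph I).Adj i j ↔ (i ≠ j ∧ (j = i + 1 ∨ i = j + 1)))
    {P : Ideal (MvPolynomial (Fin 5) K)} (hP : P ∈ I.minimalPrimes) :
    ∃ u ∉ P, u * monomial (nuWitness I) (1 : K) ∈ I := by
  have hPp : P.IsPrime := hP.1.1
  have hne (i j : Fin 5) (hij : i ≠ j ∧ (j = i + 1 ∨ i = j + 1)) :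
      (supportedOn I i j).Nonempty :=
    ((hcyc i j).mpr hij).2
  by_cases hx0 : X 0 ∈ P; swap
  · exact exists_notMem_mul_monomial_mem hPp hx0 (hne 1 0 (by decide)) (by simp [nuWitness])
  by_cases hx1 : X 1 ∈ P; swap
  · exact exists_notMem_mul_monomial_mem hPp hx1 (hne 0 1 (by decide)) (by simp [nuWitness])
  by_cases hx2 : X 2 ∈ P; swap
  · exact exists_notMem_mul_monomial_mem hPp hx2 (hne 3 2 (by decide)) (by simp [nuWitness])
  exfalso
  obtain ⟨d, hd⟩ := hne 3 4 (by decide)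
  obtain ⟨k, hk, hkP⟩ := hPp.exists_X_mem_of_monomial_one_mem (hP.1.2 hd.1.1)
  rw [hd.2] at hk
  -- `{0, 2, k}` is a vertex cover of the pentagon avoiding `1`, so `P` was not minimal.
  have hk' : k = 3 ∨ k = 4 := by simpa using hk
  have hcover : ∀ i : Fin 5, i ∈ ({0, 2, k} : Finset (Fin 5)) ∨ i + 1 ∈ ({0, 2, k} : Finset _) := by
    rcases hk' with rfl | rfl <;> decide
  have hPeq := eq_span_X_image_of_mem_minimalPrimes hP
    (le_span_X_image_of_forall_mem_or_succ_mem hmon h2 hcyc hcover)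
    (by simp [hx0, hx2, hkP])
  refine X_notMem_span_X_image ?_ (hPeq ▸ hx1)
  rcases hk' with rfl | rfl <;> decide

end Pentagon

theorem stmt15 {K : Type*} [Field K] (I : Ideal (MvPolynomial (Fin 5) K))
    (hmon : IsMonomialIdeal I) (h2 : IsSupportTwo I)
    (hcyc : ∀ i j : Fin 5, (underGraph I).Adj i j ↔
      (i ≠ j ∧ (j = i + 1 ∨ i = j + 1)))
    (a b : Fin 5 →₀ ℕ) (ha : a ∈ supportedOn I 0 1)
    (hb : b ∈ supportedOn I 0 1) (hab : a ≠ b) :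
    (monomial (Finsupp.single 0 (nuExp I 0 1) + Finsupp.single 1 (nuExp I 1 0) +
        Finsupp.single 3 (nuExp I 3 2)) (1 : K) : MvPolynomial (Fin 5) K) ∈
      symbolicPower I 1 ∧
    (monomial (Finsupp.single 0 (nuExp I 0 1) + Finsupp.single 1 (nuExp I 1 0) +
        Finsupp.single 3 (nuExp I 3 2)) (1 : K) : MvPolynomial (Fin 5) K) ∉ I ∧
    ∃ P ∈ associatedPrimes (MvPolynomial (Fin 5) K) (MvPolynomial (Fin 5) K ⧸ I),
      P ∉ I.minimalPrimes := by
  have hmin (P : Ideal (MvPolynomial (Fin 5) K)) (hP : P ∈ I.minimalPrimes) :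
      ∃ u ∉ P, u * monomial (nuWitness I) (1 : K) ∈ I :=
    exists_notMem_mul_monomial_nuWitness_mem hmon h2 hcyc hP
  have hnotMem := monomial_nuWitness_notMem h2 hcyc ha hb hab
  exact ⟨mem_symbolicPower_one_of_forall_minimalPrimes hmin, hnotMem,
    exists_mem_associatedPrimes_notMem_minimalPrimes hnotMem hmin⟩
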